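/- For every angle θ with 0 < θ < π, there exists a non-periodic tiling of the Euclidean plane ℝ² by isometric copies of the unit equilateral triangle T and the unit rhombus R(θ) in which each of the two prototiles is used infinitely many times: the set of tiles congruent to T is infinite and the set of tiles congruent to R(θ) is infinite. -/

import Mathlib

noncomputable section

open Set Metric

/-- The Euclidean plane ℝ². -/
abbrev Pt : Type := EuclideanSpace ℝ (Fin 2)

/-- A point of the plane from coordinates. -/
def pt (a b : ℝ) : Pt := !₂[a, b]

/-- The unit equilateral triangle. -/
def uT : Set Pt := convexHull ℝ {pt 0 0, pt 1 0, pt (1/2) (Real.sqrt 3 / 2)}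

/-- The unit rhombus of angle θ. -/
def uR (θ : ℝ) : Set Pt :=
  convexHull ℝ
    {pt 0 0, pt 1 0, pt (Real.cos θ) (Real.sin θ), pt (1 + Real.cos θ) (Real.sin θ)}

/-- `𝒯` is a tiling of the plane by isometric copies of the prototiles in `protos`. -/
def IsTilingBy (𝒯 : Set (Set Pt)) (protos : Set (Set Pt)) : Prop :=
  𝒯.Countable ∧ ⋃₀ 𝒯 = univ ∧
  (∀ t ∈ 𝒯, ∀ s ∈ 𝒯, t ≠ s → interior t ∩ interior s = ∅) ∧
  (∀ t ∈ 𝒯, ∃ P ∈ protos, ∃ f : Pt ≃ᵢ Pt, t = f '' P)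

/-- Translating every tile of `𝒯` by `v`. -/
def translateTiles (v : Pt) (𝒯 : Set (Set Pt)) : Set (Set Pt) :=
  (fun t => (fun x => x + v) '' t) '' 𝒯

/-- `𝒯` is non-periodic: no nonzero translation maps the set of tiles onto itself. -/
def Nonperiodic (𝒯 : Set (Set Pt)) : Prop :=
  ∀ v : Pt, v ≠ 0 → translateTiles v 𝒯 ≠ 𝒯


/-!
The tiling is built around the origin from five angular sectors, bounded by the rays at the
angles `0, θ, θ + π/3, θ + 2π/3, 5π/3`. The sectors of opening `θ` and `π - θ` are filled with
the lattice parallelograms spanned by their two bounding unit vectors, which are rhombi congruent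
to `uR θ`; the three sectors of opening `π/3` are filled with the triangular lattice. Each sector
is the image of the quadrant of `ℝ × ℝ` under the linear map sending the standard basis to its
bounding vectors, so covering and disjointness reduce to tilings of the quadrant by unit squares
and by their halves.

If the translation by `v` preserved the tiling, the translate `v +ᵥ uR θ` of the rhombus at the
origin would be a tile. It is no triangle, its diameter being larger than `1`, and no rhombus of
the fourth sector, which are rotated by `2π/3` and too narrow across their sides to contain it.
So it lies in the first sector and `v` lies in the cone spanned by `dir 0` and `dir θ`. The same
holds for `-v`, hence `v = 0`.
-/

namespace RhombusTriangleTiling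

open Real Function Topology
open scoped Pointwise

/-! ### Directions, rotations and linear frames -/

@[simp] lemma pt_apply_zero (a b : ℝ) : pt a b 0 = a := rfl
@[simp] lemma pt_apply_one (a b : ℝ) : pt a b 1 = b := rfl

lemma ext_fin_two {p q : Pt} (h0 : p 0 = q 0) (h1 : p 1 = q 1) : p = q := by
  ext i; fin_cases i <;> assumption

def cross (x y : Pt) : ℝ := x 0 * y 1 - x 1 * y 0

def dir (φ : ℝ) : Pt := pt (cos φ) (sin φ)

lemma cross_dir_dir (a b : ℝ) : cross (dir a) (dir b) = sin (b - a) := by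
  simp [cross, dir, sin_sub]; ring

lemma neg_dir (a : ℝ) : -dir a = dir (a + π) := by
  apply ext_fin_two <;> simp [dir]

lemma dir_add_two_pi (a : ℝ) : dir (a + 2 * π) = dir a := by
  simp [dir]

lemma norm_sq_eq_sq_add_sq (p : Pt) : ‖p‖ ^ 2 = p 0 ^ 2 + p 1 ^ 2 := by
  rw [EuclideanSpace.norm_sq_eq, Fin.sum_univ_two]; simp [sq_abs]

def rot (a : ℝ) : Pt ≃ₗᵢ[ℝ] Pt where
  toFun p := pt (cos a * p 0 - sin a * p 1) (sin a * p 0 + cos a * p 1)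
  invFun p := pt (cos a * p 0 + sin a * p 1) (-sin a * p 0 + cos a * p 1)
  map_add' p q := by apply ext_fin_two <;> simp <;> ring
  map_smul' c p := by apply ext_fin_two <;> simp <;> ring
  left_inv p := by
    apply ext_fin_two <;> simp
    · linear_combination p 0 * sin_sq_add_cos_sq a
    · linear_combination p 1 * sin_sq_add_cos_sq a
  right_inv p := by
    apply ext_fin_two <;> simp
    · linear_combination p 0 * sin_sq_add_cos_sq a
    · linear_combination p 1 * sin_sq_add_cos_sq a
  norm_map' p := by
    rw [← sq_eq_sq₀ (norm_nonneg _) (norm_nonneg _), norm_sq_eq_sq_add_sq, norm_sq_eq_sq_add_sq]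
    simp only [LinearEquiv.coe_mk, LinearMap.coe_mk, AddHom.coe_mk, pt_apply_zero, pt_apply_one]
    linear_combination (p 0 ^ 2 + p 1 ^ 2) * sin_sq_add_cos_sq a

lemma rot_dir (a b : ℝ) : rot a (dir b) = dir (a + b) := by
  apply ext_fin_two <;> simp [rot, dir, cos_add, sin_add]

lemma exists_eq_smul_dir (p : Pt) : ∃ r : ℝ, 0 ≤ r ∧ ∃ φ, 0 ≤ φ ∧ φ < 2 * π ∧ p = r • dir φ := by
  set z : ℂ := ⟨p 0, p 1⟩
  have hp : p = ‖z‖ • dir z.arg := by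
    apply ext_fin_two
    · simp [dir, Complex.norm_mul_cos_arg, z]
    · simp [dir, Complex.norm_mul_sin_arg, z]
  refine ⟨‖z‖, norm_nonneg z, ?_⟩
  rcases le_or_gt 0 z.arg with h | h
  · exact ⟨z.arg, h, by linarith [Complex.arg_le_pi z, pi_pos], hp⟩
  · refine ⟨z.arg + 2 * π, by linarith [Complex.neg_pi_lt_arg z], by linarith, ?_⟩
    rwa [dir_add_two_pi]

def frame (x y : Pt) : ℝ × ℝ →ₗ[ℝ] Pt :=
  (LinearMap.fst ℝ ℝ ℝ).smulRight x + (LinearMap.snd ℝ ℝ ℝ).smulRight y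

@[simp] lemma frame_apply (x y : Pt) (c : ℝ × ℝ) : frame x y c = c.1 • x + c.2 • y := rfl

lemma cross_frame (x y : Pt) (c : ℝ × ℝ) :
    cross x (frame x y c) = c.2 * cross x y ∧ cross y (frame x y c) = -(c.1 * cross x y) := by
  constructor <;> simp [cross] <;> ring

lemma frame_injective {x y : Pt} (h : cross x y ≠ 0) : Injective (frame x y) := by
  rw [← LinearMap.ker_eq_bot, LinearMap.ker_eq_bot']
  intro c hc
  obtain ⟨h1, h2⟩ := cross_frame x y c
  have h0 : ∀ z, cross z 0 = 0 := fun z => by simp [cross]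
  rw [hc, h0] at h1 h2
  ext
  · simpa [h] using h2
  · simpa [h] using h1.symm

lemma image_interior_frame {x y : Pt} (h : cross x y ≠ 0) (s : Set (ℝ × ℝ)) :
    frame x y '' interior s = interior (frame x y '' s) := by
  have hrank : Module.finrank ℝ (ℝ × ℝ) = Module.finrank ℝ Pt := by simp
  let e := (LinearEquiv.ofBijective (frame x y) ⟨frame_injective h,
    (LinearMap.injective_iff_surjective_of_finrank_eq_finrank hrank).1 (frame_injective h)⟩)
  exact e.toContinuousLinearEquiv.toHomeomorph.image_interior s

/-! ### Cones -/

def closedCone (a b : ℝ) : Set Pt := frame (dir a) (dir b) '' Ici 0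

def openCone (a b : ℝ) : Set Pt := frame (dir a) (dir b) '' (Ioi 0 ×ˢ Ioi 0)

lemma smul_dir_mem_closedCone {a b φ r : ℝ} (hr : 0 ≤ r) (haφ : a ≤ φ) (hφb : φ ≤ b)
    (hab : a < b) (hba : b - a < π) : r • dir φ ∈ closedCone a b := by
  have hs : 0 < sin (b - a) := sin_pos_of_pos_of_lt_pi (by linarith) hba
  -- the coefficients come from the law of sines
  refine ⟨(r * sin (b - φ) / sin (b - a), r * sin (φ - a) / sin (b - a)), ⟨?_, ?_⟩, ?_⟩
  · exact div_nonneg (mul_nonneg hr (sin_nonneg_of_nonneg_of_le_pi (by linarith) (by linarith)))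
      hs.le
  · exact div_nonneg (mul_nonneg hr (sin_nonneg_of_nonneg_of_le_pi (by linarith) (by linarith)))
      hs.le
  · apply ext_fin_two <;> simp [dir] <;> field_simp <;> simp only [sin_sub] <;> ring

lemma exists_cross_dir_eq_of_mem_openCone {a b c : ℝ} {p : Pt} (hp : p ∈ openCone a b) :
    ∃ α β : ℝ, 0 < α ∧ 0 < β ∧ cross (dir c) p = α * sin (a - c) + β * sin (b - c) := by
  obtain ⟨⟨α, β⟩, ⟨hα, hβ⟩, rfl⟩ := hp
  exact ⟨α, β, hα, hβ, by simp [cross, dir, sin_sub]; ring⟩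

lemma cross_dir_neg_of_mem_openCone {a b c : ℝ} {p : Pt} (hca : c - π ≤ a) (hab : a < b)
    (hbc : b ≤ c) (hba : b - a < π) (hp : p ∈ openCone a b) : cross (dir c) p < 0 := by
  obtain ⟨α, β, hα, hβ, hcross⟩ := exists_cross_dir_eq_of_mem_openCone (c := c) hp
  have ha : sin (a - c) ≤ 0 := sin_nonpos_of_nonpos_of_neg_pi_le (by linarith) (by linarith)
  have hb : sin (b - c) ≤ 0 := sin_nonpos_of_nonpos_of_neg_pi_le (by linarith) (by linarith)
  rcases eq_or_lt_of_le hca with h | h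
  · have : sin (b - c) < 0 := sin_neg_of_neg_of_neg_pi_lt (by linarith) (by linarith)
    nlinarith
  · have : sin (a - c) < 0 := sin_neg_of_neg_of_neg_pi_lt (by linarith) (by linarith)
    nlinarith

lemma cross_dir_pos_of_mem_openCone {a b c : ℝ} {p : Pt} (hca : c ≤ a) (hab : a < b)
    (hbc : b ≤ c + π) (hba : b - a < π) (hp : p ∈ openCone a b) : 0 < cross (dir c) p := by
  have h := cross_dir_neg_of_mem_openCone (c := c + π) (by linarith) hab hbc hba hp
  rw [← neg_dir] at h
  simp only [cross, PiLp.neg_apply] at h ⊢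
  linarith

/-- The line through the ray at angle `max b (b' - π)` separates the two cones. -/
lemma disjoint_openCone {a b a' b' : ℝ} (hab : a < b) (hba : b - a < π) (hba' : b ≤ a')
    (ha'b' : a' < b') (hb'a' : b' - a' < π) (hb'a : b' ≤ a + 2 * π) :
    Disjoint (openCone a b) (openCone a' b') := by
  have hc : max b (b' - π) ≤ a + π := max_le (by linarith) (by linarith)
  rw [Set.disjoint_left]
  intro p hp hp'
  have h₁ := cross_dir_neg_of_mem_openCone (by linarith) hab (le_max_left _ _) hba hp
  have h₂ := cross_dir_pos_of_mem_openCone (c := max b (b' - π)) (max_le hba' (by linarith)) ha'b'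
    (by linarith [le_max_right b (b' - π)]) hb'a' hp'
  linarith

/-! ### Tilings of the quadrant -/

lemma lt_of_mem_interior_of_forall_le {E : Type*} [AddCommGroup E] [Module ℝ E]
    [TopologicalSpace E] [ContinuousAdd E] [ContinuousSMul ℝ E] {f : E →ₗ[ℝ] ℝ} {v : E}
    (hv : 0 < f v) {s : Set E} {k : ℝ} (hs : ∀ c ∈ s, f c ≤ k) {c : E} (hc : c ∈ interior s) :
    f c < k := by
  have hnhds : ∀ᶠ t in 𝓝 (0 : ℝ), c + t • v ∈ s := by
    have hcont : Continuous fun t : ℝ => c + t • v := by fun_prop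
    exact hcont.continuousAt.preimage_mem_nhds (by simpa using mem_interior_iff_mem_nhds.1 hc)
  obtain ⟨t, hts, ht⟩ :=
    ((hnhds.filter_mono nhdsWithin_le_nhds).and (eventually_mem_nhdsWithin (s := Ioi 0))).exists
  have := hs _ hts
  rw [map_add, map_smul, smul_eq_mul] at this
  nlinarith [mem_Ioi.1 ht]

lemma pairwise_disjoint_interior_range {ι α : Type*} [TopologicalSpace α] {F : ι → Set α}
    (label : α → ι) (hlabel : ∀ i, ∀ c ∈ interior (F i), label c = i) :
    (range F).Pairwise (Disjoint on interior) := by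
  rintro _ ⟨i, rfl⟩ _ ⟨j, rfl⟩ hne
  refine Set.disjoint_left.2 fun c hi hj => hne ?_
  rw [← hlabel i c hi, hlabel j c hj]

structure IsQuadrantTiling (𝒮 : Set (Set (ℝ × ℝ))) : Prop where
  countable : 𝒮.Countable
  subset_Ici : ∀ s ∈ 𝒮, s ⊆ Ici 0
  Ici_subset : Ici 0 ⊆ ⋃₀ 𝒮
  interior_subset : ∀ s ∈ 𝒮, interior s ⊆ Ioi 0 ×ˢ Ioi 0
  pairwise_disjoint : 𝒮.Pairwise (Disjoint on interior)

def corner (k : ℕ × ℕ) : ℝ × ℝ := (k.1, k.2)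

lemma mem_corner_vadd {k : ℕ × ℕ} {s : Set (ℝ × ℝ)} {c : ℝ × ℝ} :
    c ∈ corner k +ᵥ s ↔ (c.1 - k.1, c.2 - k.2) ∈ s := by
  rw [mem_vadd_set_iff_neg_vadd_mem, vadd_eq_add, neg_add_eq_sub]; rfl

lemma mem_Icc_zero_one {c : ℝ × ℝ} :
    c ∈ Icc (0 : ℝ × ℝ) 1 ↔ (0 ≤ c.1 ∧ c.1 ≤ 1) ∧ 0 ≤ c.2 ∧ c.2 ≤ 1 := by
  rw [Icc_prod_eq]; rfl

lemma sub_floor_mem_Icc {c : ℝ × ℝ} (hc : 0 ≤ c) :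
    (c.1 - ⌊c.1⌋₊, c.2 - ⌊c.2⌋₊) ∈ Icc (0 : ℝ × ℝ) 1 := by
  obtain ⟨h1, h2⟩ := hc
  refine mem_Icc_zero_one.2 ⟨⟨?_, ?_⟩, ?_, ?_⟩
  · linarith [Nat.floor_le h1]
  · linarith [Nat.lt_floor_add_one c.1]
  · linarith [Nat.floor_le h2]
  · linarith [Nat.lt_floor_add_one c.2]

lemma floor_eq_of_mem_corner_vadd {k : ℕ × ℕ} {c : ℝ × ℝ}
    (hc : c ∈ corner k +ᵥ Ioo (0 : ℝ) 1 ×ˢ Ioo (0 : ℝ) 1) :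
    (⌊c.1⌋₊, ⌊c.2⌋₊) = k ∧ c ∈ Ioi 0 ×ˢ Ioi 0 := by
  obtain ⟨⟨h1, h1'⟩, h2, h2'⟩ := mem_corner_vadd.1 hc
  dsimp at h1 h1' h2 h2'
  have hk1 : (0 : ℝ) ≤ k.1 := k.1.cast_nonneg
  have hk2 : (0 : ℝ) ≤ k.2 := k.2.cast_nonneg
  refine ⟨Prod.ext ?_ ?_, ?_, ?_⟩
  · exact (Nat.floor_eq_iff (by linarith)).2 ⟨by linarith, by linarith⟩
  · exact (Nat.floor_eq_iff (by linarith)).2 ⟨by linarith, by linarith⟩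
  · show 0 < c.1; linarith
  · show 0 < c.2; linarith

def cell (k : ℕ × ℕ) : Set (ℝ × ℝ) := corner k +ᵥ Icc (0 : ℝ × ℝ) 1

lemma mem_cell {k : ℕ × ℕ} {c : ℝ × ℝ} :
    c ∈ cell k ↔ (c.1 - k.1, c.2 - k.2) ∈ Icc (0 : ℝ × ℝ) 1 :=
  mem_corner_vadd

def squareTiling : Set (Set (ℝ × ℝ)) := range cell

lemma isQuadrantTiling_squareTiling : IsQuadrantTiling squareTiling := by
  have hint : ∀ k, interior (cell k) = corner k +ᵥ Ioo (0 : ℝ) 1 ×ˢ Ioo (0 : ℝ) 1 := fun k => by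
    rw [cell, interior_vadd, Icc_prod_eq, interior_prod_eq]; simp
  refine ⟨countable_range _, ?_, ?_, ?_, ?_⟩
  · rintro _ ⟨k, rfl⟩ c hc
    obtain ⟨⟨h1, -⟩, h2, -⟩ := mem_Icc_zero_one.1 (mem_cell.1 hc)
    exact ⟨k.1.cast_nonneg.trans (sub_nonneg.1 h1), k.2.cast_nonneg.trans (sub_nonneg.1 h2)⟩
  · intro c hc
    exact ⟨_, ⟨(⌊c.1⌋₊, ⌊c.2⌋₊), rfl⟩, mem_cell.2 (sub_floor_mem_Icc hc)⟩
  · rintro _ ⟨k, rfl⟩ c hc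
    rw [hint] at hc
    exact (floor_eq_of_mem_corner_vadd hc).2
  · refine pairwise_disjoint_interior_range (fun c => (⌊c.1⌋₊, ⌊c.2⌋₊)) fun k c hc => ?_
    rw [hint] at hc
    exact (floor_eq_of_mem_corner_vadd hc).1

lemma mem_corner_add_one_vadd_neg {k : ℕ × ℕ} {s : Set (ℝ × ℝ)} {c : ℝ × ℝ} :
    c ∈ (corner k + 1) +ᵥ -s ↔ ((k.1 : ℝ) + 1 - c.1, (k.2 : ℝ) + 1 - c.2) ∈ s := by
  rw [mem_vadd_set_iff_neg_vadd_mem, Set.mem_neg, vadd_eq_add, neg_add_eq_sub, neg_sub]; rfl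

def unitTri : Set (ℝ × ℝ) := {c | 0 ≤ c.1 ∧ 0 ≤ c.2 ∧ c.1 + c.2 ≤ 1}

lemma interior_unitTri_subset :
    interior unitTri ⊆ {c | 0 < c.1 ∧ 0 < c.2 ∧ c.1 + c.2 < 1} := by
  intro c hc
  refine ⟨?_, ?_, ?_⟩
  · have := lt_of_mem_interior_of_forall_le (f := -LinearMap.fst ℝ ℝ ℝ) (v := (-1, 0))
      (k := 0) (by simp) (fun c hc => by simpa using hc.1) hc
    simpa using this
  · have := lt_of_mem_interior_of_forall_le (f := -LinearMap.snd ℝ ℝ ℝ) (v := (0, -1))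
      (k := 0) (by simp) (fun c hc => by simpa using hc.2.1) hc
    simpa using this
  · exact lt_of_mem_interior_of_forall_le (f := LinearMap.fst ℝ ℝ ℝ + LinearMap.snd ℝ ℝ ℝ)
      (v := (1, 1)) (by simp) (fun c hc => hc.2.2) hc

/-- The lower (`false`) and upper (`true`) half of `cell k`, cut along its anti-diagonal. -/
def triPiece (k : ℕ × ℕ) (upper : Bool) : Set (ℝ × ℝ) :=
  if upper then (corner k + 1) +ᵥ -unitTri else corner k +ᵥ unitTri

def triTiling : Set (Set (ℝ × ℝ)) := range fun i : (ℕ × ℕ) × Bool => triPiece i.1 i.2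

lemma mem_interior_triPiece {k : ℕ × ℕ} {b : Bool} {c : ℝ × ℝ}
    (hc : c ∈ interior (triPiece k b)) :
    c ∈ corner k +ᵥ Ioo (0 : ℝ) 1 ×ˢ Ioo (0 : ℝ) 1 ∧
      ((k.1 + k.2 + 1 : ℝ) < c.1 + c.2 ↔ b = true) := by
  cases b
  · rw [triPiece, if_neg Bool.false_ne_true, interior_vadd] at hc
    obtain ⟨h1, h2, h3⟩ := interior_unitTri_subset (mem_corner_vadd.1 hc)
    dsimp at h1 h2 h3
    refine ⟨mem_corner_vadd.2 ⟨⟨h1, by linarith⟩, h2, by linarith⟩, ?_⟩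
    simp only [Bool.false_eq_true, iff_false, not_lt]
    linarith
  · have hneg : interior (-unitTri) = -interior unitTri :=
      ((Homeomorph.neg (ℝ × ℝ)).preimage_interior unitTri).symm
    rw [triPiece, if_pos rfl, interior_vadd, hneg] at hc
    obtain ⟨h1, h2, h3⟩ := interior_unitTri_subset (mem_corner_add_one_vadd_neg.1 hc)
    dsimp at h1 h2 h3
    refine ⟨mem_corner_vadd.2 ⟨⟨by linarith, by linarith⟩, by linarith, by linarith⟩, ?_⟩
    simp only [iff_true]
    linarith

lemma isQuadrantTiling_triTiling : IsQuadrantTiling triTiling := by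
  refine ⟨countable_range _, ?_, ?_, ?_, ?_⟩
  · rintro _ ⟨⟨k, b⟩, rfl⟩ c hc
    have hk1 : (0 : ℝ) ≤ k.1 := k.1.cast_nonneg
    have hk2 : (0 : ℝ) ≤ k.2 := k.2.cast_nonneg
    cases b
    · obtain ⟨h1, h2, -⟩ := mem_corner_vadd.1 hc
      dsimp at h1 h2
      exact ⟨show 0 ≤ c.1 by linarith, show 0 ≤ c.2 by linarith⟩
    · obtain ⟨h1, h2, h3⟩ := mem_corner_add_one_vadd_neg.1 hc
      dsimp at h1 h2 h3
      exact ⟨show 0 ≤ c.1 by linarith, show 0 ≤ c.2 by linarith⟩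
  · intro c hc
    obtain ⟨⟨h1, h2⟩, h1', h2'⟩ := sub_floor_mem_Icc hc
    dsimp at h1 h2 h1' h2'
    rcases le_or_gt (c.1 - ⌊c.1⌋₊ + (c.2 - ⌊c.2⌋₊)) 1 with h | h
    · exact ⟨_, ⟨((⌊c.1⌋₊, ⌊c.2⌋₊), false), rfl⟩, mem_corner_vadd.2 ⟨h1, h2, h⟩⟩
    · refine ⟨_, ⟨((⌊c.1⌋₊, ⌊c.2⌋₊), true), rfl⟩, mem_corner_add_one_vadd_neg.2 ?_⟩
      exact ⟨by dsimp; linarith, by dsimp; linarith, by dsimp; linarith⟩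
  · rintro _ ⟨⟨k, b⟩, rfl⟩ c hc
    exact (floor_eq_of_mem_corner_vadd (mem_interior_triPiece hc).1).2
  · refine pairwise_disjoint_interior_range
      (fun c => ((⌊c.1⌋₊, ⌊c.2⌋₊), decide (((⌊c.1⌋₊ + ⌊c.2⌋₊ + 1 : ℕ) : ℝ) < c.1 + c.2)))
      fun i c hc => ?_
    obtain ⟨k, b⟩ := i
    obtain ⟨hcell, hb⟩ := mem_interior_triPiece hc
    obtain ⟨hk, -⟩ := floor_eq_of_mem_corner_vadd hcell
    obtain ⟨hk1, hk2⟩ := Prod.ext_iff.1 hk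
    dsimp only at hk1 hk2 hb ⊢
    rw [hk]
    congr 1
    push_cast [hk1, hk2]
    cases b <;> simpa using hb

/-! ### Sector tilings -/

def sectorTiling (a b : ℝ) (𝒮 : Set (Set (ℝ × ℝ))) : Set (Set Pt) :=
  (fun s => frame (dir a) (dir b) '' s) '' 𝒮

namespace IsQuadrantTiling

variable {𝒮 : Set (Set (ℝ × ℝ))} {a b : ℝ}

lemma countable_sectorTiling (h𝒮 : IsQuadrantTiling 𝒮) : (sectorTiling a b 𝒮).Countable :=
  h𝒮.countable.image _

lemma closedCone_subset_sUnion (h𝒮 : IsQuadrantTiling 𝒮) :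
    closedCone a b ⊆ ⋃₀ sectorTiling a b 𝒮 := by
  rintro _ ⟨c, hc, rfl⟩
  obtain ⟨s, hs, hcs⟩ := h𝒮.Ici_subset hc
  exact ⟨_, mem_image_of_mem _ hs, mem_image_of_mem _ hcs⟩

lemma subset_closedCone (h𝒮 : IsQuadrantTiling 𝒮) {t : Set Pt} (ht : t ∈ sectorTiling a b 𝒮) :
    t ⊆ closedCone a b := by
  obtain ⟨s, hs, rfl⟩ := ht
  exact image_mono (h𝒮.subset_Ici s hs)

lemma interior_subset_openCone (h𝒮 : IsQuadrantTiling 𝒮) (hab : sin (b - a) ≠ 0) {t : Set Pt}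
    (ht : t ∈ sectorTiling a b 𝒮) : interior t ⊆ openCone a b := by
  obtain ⟨s, hs, rfl⟩ := ht
  rw [← image_interior_frame (by rwa [cross_dir_dir])]
  exact image_mono (h𝒮.interior_subset s hs)

lemma pairwise_disjoint_sectorTiling (h𝒮 : IsQuadrantTiling 𝒮) (hab : sin (b - a) ≠ 0) :
    (sectorTiling a b 𝒮).Pairwise (Disjoint on interior) := by
  have h : cross (dir a) (dir b) ≠ 0 := by rwa [cross_dir_dir]
  rintro _ ⟨s, hs, rfl⟩ _ ⟨s', hs', rfl⟩ hne
  simp only [onFun, ← image_interior_frame h, disjoint_image_iff (frame_injective h)]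
  exact h𝒮.pairwise_disjoint hs hs' fun h' => hne (h' ▸ rfl)

end IsQuadrantTiling

/-! ### The tiles are congruent to the prototiles -/

lemma Icc_zero_one_eq_convexHull :
    Icc (0 : ℝ × ℝ) 1 = convexHull ℝ {(0, 0), (1, 0), (0, 1), (1, 1)} := by
  rw [Icc_prod_eq, Prod.fst_zero, Prod.snd_zero, Prod.fst_one, Prod.snd_one,
    ← segment_eq_Icc zero_le_one, ← convexHull_pair, ← convexHull_prod]
  congr 1
  ext ⟨x, y⟩
  simp only [mem_prod, mem_insert_iff, mem_singleton_iff, Prod.mk.injEq]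
  tauto

lemma unitTri_eq_convexHull : unitTri = convexHull ℝ {(0, 0), (1, 0), (0, 1)} := by
  apply Subset.antisymm
  · rintro ⟨x, y⟩ ⟨hx, hy, hxy⟩
    have := (convex_convexHull ℝ ({(0, 0), (1, 0), (0, 1)} : Set (ℝ × ℝ))).sum_mem
      (t := Finset.univ) (w := ![1 - x - y, x, y]) (z := ![(0, 0), (1, 0), (0, 1)])
      (fun i _ => by fin_cases i <;> simp <;> linarith) (by simp [Fin.sum_univ_three]; ring)
      (fun i _ => by fin_cases i <;> apply subset_convexHull <;> simp)
    simpa [Fin.sum_univ_three] using this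
  · refine convexHull_min ?_ ?_
    · intro c hc
      simp only [mem_insert_iff, mem_singleton_iff] at hc
      rcases hc with rfl | rfl | rfl <;> norm_num [unitTri]
    · intro c hc c' hc' s t hs ht hst
      obtain ⟨h1, h2, h3⟩ := hc
      obtain ⟨h1', h2', h3'⟩ := hc'
      refine ⟨?_, ?_, ?_⟩ <;> simp only [Prod.fst_add, Prod.snd_add, Prod.smul_fst,
        Prod.smul_snd, smul_eq_mul] <;> nlinarith

lemma uR_eq_image_frame (θ : ℝ) : uR θ = frame (dir 0) (dir θ) '' Icc 0 1 := by
  rw [Icc_zero_one_eq_convexHull, LinearMap.image_convexHull, uR]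
  congr 1
  simp only [image_insert_eq, image_singleton, frame_apply]
  have h : ∀ a b : ℝ, a • dir 0 + b • dir θ = pt (a + b * cos θ) (b * sin θ) := fun a b => by
    apply ext_fin_two <;> simp [dir]
  simp only [h]
  norm_num

lemma uT_eq_image_frame : uT = frame (dir 0) (dir (π / 3)) '' unitTri := by
  rw [unitTri_eq_convexHull, LinearMap.image_convexHull, uT]
  congr 1
  simp only [image_insert_eq, image_singleton, frame_apply]
  have h : ∀ a b : ℝ, a • dir 0 + b • dir (π / 3) = pt (a + b / 2) (b * (√3 / 2)) :=
    fun a b => by apply ext_fin_two <;> simp [dir]; ring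
  simp only [h]
  norm_num

lemma rot_add_pi (a : ℝ) (p : Pt) : rot (a + π) p = -rot a p := by
  apply ext_fin_two <;> simp [rot, cos_add, sin_add] <;> ring

lemma image_rot_image_frame (a : ℝ) (x y : Pt) (s : Set (ℝ × ℝ)) :
    rot a '' (frame x y '' s) = frame (rot a x) (rot a y) '' s := by
  rw [image_image]; congr! 1; ext c; simp

lemma image_frame_Icc_eq_rot (a θ : ℝ) :
    frame (dir a) (dir (a + θ)) '' Icc 0 1 = rot a '' uR θ := by
  rw [uR_eq_image_frame, image_rot_image_frame, rot_dir, rot_dir, add_zero]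

lemma image_frame_Icc_eq_vadd (x y : Pt) :
    frame x y '' Icc 0 1 = y +ᵥ frame (-y) x '' Icc 0 1 := by
  ext p
  simp only [mem_image, mem_vadd_set, vadd_eq_add, frame_apply, mem_Icc_zero_one]
  constructor
  · rintro ⟨c, ⟨⟨h1, h1'⟩, h2, h2'⟩, rfl⟩
    refine ⟨_, ⟨(1 - c.2, c.1), ⟨⟨by linarith, by linarith⟩, h1, h1'⟩, rfl⟩, ?_⟩
    simp only [smul_neg, sub_smul, one_smul]
    abel
  · rintro ⟨_, ⟨c, ⟨⟨h1, h1'⟩, h2, h2'⟩, rfl⟩, rfl⟩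
    refine ⟨(c.2, 1 - c.1), ⟨⟨h2, h2'⟩, by linarith, by linarith⟩, ?_⟩
    simp only [smul_neg, sub_smul, one_smul]
    abel

lemma image_frame_Icc_eq_vadd_rot (a θ : ℝ) :
    frame (dir a) (dir (a + (π - θ))) '' Icc 0 1 = dir (a + (π - θ)) +ᵥ rot (a - θ) '' uR θ := by
  have h : a + (π - θ) + π = a - θ + 2 * π := by ring
  rw [image_frame_Icc_eq_vadd, neg_dir, h, dir_add_two_pi, ← image_frame_Icc_eq_rot,
    sub_add_cancel]

lemma image_frame_unitTri_eq_rot (a : ℝ) :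
    frame (dir a) (dir (a + π / 3)) '' unitTri = rot a '' uT := by
  rw [uT_eq_image_frame, image_rot_image_frame, rot_dir, rot_dir, add_zero]

lemma neg_image_rot (a : ℝ) (s : Set Pt) : -(rot a '' s) = rot (a + π) '' s := by
  rw [← image_neg_eq_neg, image_image]
  simp only [rot_add_pi]

lemma exists_isometryEquiv_vadd_image {E : Type*} [SeminormedAddCommGroup E] [Module ℝ E]
    (v : E) (Φ : E ≃ₗᵢ[ℝ] E) (P : Set E) : ∃ f : E ≃ᵢ E, v +ᵥ Φ '' P = f '' P :=
  ⟨Φ.toIsometryEquiv.trans (IsometryEquiv.constVAdd v), by rw [← image_vadd, image_image]; rfl⟩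

lemma exists_eq_image_uR_of_mem_sectorTiling {a b θ : ℝ} {t : Set Pt}
    (hb : b = a + θ ∨ b = a + (π - θ)) (ht : t ∈ sectorTiling a b squareTiling) :
    ∃ f : Pt ≃ᵢ Pt, t = f '' uR θ := by
  obtain ⟨_, ⟨k, rfl⟩, rfl⟩ := ht
  dsimp only
  rw [cell, image_vadd_distrib]
  rcases hb with rfl | rfl
  · rw [image_frame_Icc_eq_rot]
    exact exists_isometryEquiv_vadd_image _ _ _
  · rw [image_frame_Icc_eq_vadd_rot, vadd_vadd]
    exact exists_isometryEquiv_vadd_image _ _ _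

lemma exists_eq_image_uT_of_mem_sectorTiling {a b : ℝ} {t : Set Pt} (hb : b = a + π / 3)
    (ht : t ∈ sectorTiling a b triTiling) : ∃ f : Pt ≃ᵢ Pt, t = f '' uT := by
  obtain ⟨_, ⟨⟨k, _ | _⟩, rfl⟩, rfl⟩ := ht <;> subst hb <;> dsimp only
  · rw [triPiece, if_neg Bool.false_ne_true, image_vadd_distrib, image_frame_unitTri_eq_rot]
    exact exists_isometryEquiv_vadd_image _ _ _
  · rw [triPiece, if_pos rfl, image_vadd_distrib, image_neg, image_frame_unitTri_eq_rot,
      neg_image_rot]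
    exact exists_isometryEquiv_vadd_image _ _ _

/-! ### The tiling -/

/-- The two rhombus sectors (`0` and `3`) must not be adjacent: together they would form a
half-plane filled by rows of rhombi, and the whole tiling would be periodic. -/
def lowerAngle (θ : ℝ) : Fin 5 → ℝ := ![0, θ, θ + π / 3, θ + 2 * π / 3, 5 * π / 3]

def upperAngle (θ : ℝ) : Fin 5 → ℝ := ![θ, θ + π / 3, θ + 2 * π / 3, 5 * π / 3, 2 * π]

def sectorShape : Fin 5 → Set (Set (ℝ × ℝ)) :=
  ![squareTiling, triTiling, triTiling, squareTiling, triTiling]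

def tiling (θ : ℝ) : Set (Set Pt) :=
  ⋃ i, sectorTiling (lowerAngle θ i) (upperAngle θ i) (sectorShape i)

lemma isQuadrantTiling_sectorShape (i : Fin 5) : IsQuadrantTiling (sectorShape i) := by
  fin_cases i
  all_goals first | exact isQuadrantTiling_squareTiling | exact isQuadrantTiling_triTiling

section

variable {θ : ℝ}

lemma lowerAngle_lt_upperAngle (hθ : 0 < θ) (hθπ : θ < π) (i : Fin 5) :
    lowerAngle θ i < upperAngle θ i ∧ upperAngle θ i - lowerAngle θ i < π := by
  fin_cases i <;> simp [lowerAngle, upperAngle] <;> constructor <;> linarith [pi_pos]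

lemma sin_sub_lowerAngle_ne_zero (hθ : 0 < θ) (hθπ : θ < π) (i : Fin 5) :
    sin (upperAngle θ i - lowerAngle θ i) ≠ 0 := by
  obtain ⟨h1, h2⟩ := lowerAngle_lt_upperAngle hθ hθπ i
  exact (sin_pos_of_pos_of_lt_pi (by linarith) h2).ne'

lemma exists_mem_closedCone (hθ : 0 < θ) (hθπ : θ < π) (p : Pt) :
    ∃ i, p ∈ closedCone (lowerAngle θ i) (upperAngle θ i) := by
  obtain ⟨r, hr, φ, hφ0, hφ2π, rfl⟩ := exists_eq_smul_dir p
  have hmem : ∀ i, lowerAngle θ i ≤ φ → φ ≤ upperAngle θ i →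
      ∃ i, r • dir φ ∈ closedCone (lowerAngle θ i) (upperAngle θ i) := fun i h1 h2 =>
    ⟨i, smul_dir_mem_closedCone hr h1 h2 (lowerAngle_lt_upperAngle hθ hθπ i).1
      (lowerAngle_lt_upperAngle hθ hθπ i).2⟩
  rcases le_or_gt φ θ with h1 | h1
  · exact hmem 0 (by simpa [lowerAngle]) (by simpa [upperAngle])
  rcases le_or_gt φ (θ + π / 3) with h2 | h2
  · exact hmem 1 (by simpa [lowerAngle] using h1.le) (by simpa [upperAngle])
  rcases le_or_gt φ (θ + 2 * π / 3) with h3 | h3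
  · exact hmem 2 (by simpa [lowerAngle] using h2.le) (by simpa [upperAngle])
  rcases le_or_gt φ (5 * π / 3) with h4 | h4
  · exact hmem 3 (by simpa [lowerAngle] using h3.le) (by simpa [upperAngle])
  · exact hmem 4 (by simpa [lowerAngle] using h4.le) (by simpa [upperAngle] using hφ2π.le)

lemma pairwise_disjoint_openCone (hθ : 0 < θ) (hθπ : θ < π) :
    Pairwise (Disjoint on fun i => openCone (lowerAngle θ i) (upperAngle θ i)) := by
  have hsorted : ∀ i j : Fin 5, i < j →
      upperAngle θ i ≤ lowerAngle θ j ∧ upperAngle θ j ≤ lowerAngle θ i + 2 * π := by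
    intro i j hij
    fin_cases i <;> fin_cases j <;> simp [lowerAngle, upperAngle] at hij ⊢ <;>
      (try constructor) <;> linarith [pi_pos]
  have hdisj : ∀ i j : Fin 5, i < j →
      Disjoint (openCone (lowerAngle θ i) (upperAngle θ i))
        (openCone (lowerAngle θ j) (upperAngle θ j)) := fun i j hij =>
    disjoint_openCone (lowerAngle_lt_upperAngle hθ hθπ i).1 (lowerAngle_lt_upperAngle hθ hθπ i).2
      (hsorted i j hij).1 (lowerAngle_lt_upperAngle hθ hθπ j).1
      (lowerAngle_lt_upperAngle hθ hθπ j).2 (hsorted i j hij).2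
  intro i j hij
  rcases lt_or_gt_of_ne hij with h | h
  · exact hdisj i j h
  · exact (hdisj j i h).symm

lemma exists_eq_image_of_mem_sector {i : Fin 5} {t : Set Pt}
    (ht : t ∈ sectorTiling (lowerAngle θ i) (upperAngle θ i) (sectorShape i)) :
    ∃ P ∈ ({uT, uR θ} : Set (Set Pt)), ∃ f : Pt ≃ᵢ Pt, t = f '' P := by
  have hT : uT ∈ ({uT, uR θ} : Set (Set Pt)) := mem_insert _ _
  have hR : uR θ ∈ ({uT, uR θ} : Set (Set Pt)) := mem_insert_of_mem _ rfl
  fin_cases i <;> simp only [lowerAngle, upperAngle, sectorShape] at ht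
  · exact ⟨_, hR, exists_eq_image_uR_of_mem_sectorTiling (Or.inl (by simp)) ht⟩
  · exact ⟨_, hT, exists_eq_image_uT_of_mem_sectorTiling (by simp) ht⟩
  · exact ⟨_, hT, exists_eq_image_uT_of_mem_sectorTiling (by simp; ring) ht⟩
  · exact ⟨_, hR, exists_eq_image_uR_of_mem_sectorTiling (Or.inr (by simp; ring)) ht⟩
  · exact ⟨_, hT, exists_eq_image_uT_of_mem_sectorTiling (by simp; ring) ht⟩

lemma isTilingBy_tiling (hθ : 0 < θ) (hθπ : θ < π) : IsTilingBy (tiling θ) {uT, uR θ} := by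
  refine ⟨countable_iUnion fun i => (isQuadrantTiling_sectorShape i).countable_sectorTiling,
    ?_, ?_, fun t ht => ?_⟩
  · refine eq_univ_of_forall fun p => ?_
    obtain ⟨i, hi⟩ := exists_mem_closedCone hθ hθπ p
    obtain ⟨t, ht, hpt⟩ := (isQuadrantTiling_sectorShape i).closedCone_subset_sUnion hi
    exact ⟨t, mem_iUnion_of_mem i ht, hpt⟩
  · intro t ht s hs hne
    rw [← disjoint_iff_inter_eq_empty]
    obtain ⟨i, hi⟩ := mem_iUnion.1 ht
    obtain ⟨j, hj⟩ := mem_iUnion.1 hs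
    have hsin := sin_sub_lowerAngle_ne_zero hθ hθπ
    rcases eq_or_ne i j with rfl | hij
    · exact (isQuadrantTiling_sectorShape i).pairwise_disjoint_sectorTiling (hsin i) hi hj hne
    · exact (pairwise_disjoint_openCone hθ hθπ hij).mono
        ((isQuadrantTiling_sectorShape i).interior_subset_openCone (hsin i) hi)
        ((isQuadrantTiling_sectorShape j).interior_subset_openCone (hsin j) hj)
  · obtain ⟨i, hi⟩ := mem_iUnion.1 ht
    exact exists_eq_image_of_mem_sector hi

end

/-! ### Non-periodicity -/

lemma dist_pt (a b c d : ℝ) : dist (pt a b) (pt c d) = √((a - c) ^ 2 + (b - d) ^ 2) := by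
  rw [EuclideanSpace.dist_eq, Fin.sum_univ_two]; simp [Real.dist_eq, sq_abs]

lemma diam_uT_le_one : Metric.diam uT ≤ 1 := by
  rw [uT, convexHull_diam]
  refine Metric.diam_le_of_forall_dist_le zero_le_one ?_
  have h3 : √3 ^ 2 = 3 := Real.sq_sqrt (by norm_num)
  simp only [mem_insert_iff, mem_singleton_iff]
  rintro p (rfl | rfl | rfl) q (rfl | rfl | rfl) <;> rw [dist_pt, Real.sqrt_le_one] <;>
    nlinarith [h3]

lemma one_lt_diam_uR (θ : ℝ) : 1 < Metric.diam (uR θ) := by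
  rw [uR, convexHull_diam]
  have hb : Bornology.IsBounded
      ({pt 0 0, pt 1 0, pt (cos θ) (sin θ), pt (1 + cos θ) (sin θ)} : Set Pt) :=
    (toFinite _).isBounded
  have h₁ := Metric.dist_le_diam_of_mem hb (x := pt 0 0) (y := pt (1 + cos θ) (sin θ))
    (by simp) (by simp)
  have h₂ := Metric.dist_le_diam_of_mem hb (x := pt 1 0) (y := pt (cos θ) (sin θ))
    (by simp) (by simp)
  rw [dist_pt] at h₁ h₂
  have hcs := sin_sq_add_cos_sq θ
  rcases le_total 0 (cos θ) with hc | hc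
  · exact lt_of_lt_of_le ((Real.lt_sqrt zero_le_one).2 (by nlinarith)) h₁
  · exact lt_of_lt_of_le ((Real.lt_sqrt zero_le_one).2 (by nlinarith)) h₂

lemma vadd_uR_ne_image_uT (θ : ℝ) (z : Pt) (f : Pt ≃ᵢ Pt) : z +ᵥ uR θ ≠ f '' uT := by
  intro h
  have hdiam := congrArg Metric.diam h
  rw [f.diam_image, show z +ᵥ uR θ = IsometryEquiv.constVAdd z '' uR θ from rfl,
    IsometryEquiv.diam_image] at hdiam
  linarith [diam_uT_le_one, one_lt_diam_uR θ]

lemma abs_cross_sub_le {x y f p q : Pt} {k : ℕ × ℕ} (hf : f = x ∨ f = y)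
    (hp : p ∈ frame x y '' cell k) (hq : q ∈ frame x y '' cell k) :
    |cross f (p - q)| ≤ |cross x y| := by
  obtain ⟨c, hc, rfl⟩ := hp
  obtain ⟨c', hc', rfl⟩ := hq
  obtain ⟨⟨h1, h1'⟩, h2, h2'⟩ := mem_Icc_zero_one.1 (mem_cell.1 hc)
  obtain ⟨⟨g1, g1'⟩, g2, g2'⟩ := mem_Icc_zero_one.1 (mem_cell.1 hc')
  obtain ⟨e1, e2⟩ := cross_frame x y (c - c')
  rw [← map_sub]
  rcases hf with rfl | rfl
  · rw [e1, abs_mul]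
    refine mul_le_of_le_one_left (abs_nonneg _) (abs_le.2 ⟨?_, ?_⟩) <;> dsimp <;> linarith
  · rw [e2, abs_neg, abs_mul]
    refine mul_le_of_le_one_left (abs_nonneg _) (abs_le.2 ⟨?_, ?_⟩) <;> dsimp <;> linarith

lemma abs_add_abs_cross_le {θ : ℝ} {x y z f : Pt} {k : ℕ × ℕ} (hf : f = x ∨ f = y)
    (h : z +ᵥ uR θ ⊆ frame x y '' cell k) :
    |cross f (dir 0)| + |cross f (dir θ)| ≤ |cross x y| := by
  have hwidth : ∀ c ∈ Icc (0 : ℝ × ℝ) 1, ∀ c' ∈ Icc (0 : ℝ × ℝ) 1,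
      |(c.1 - c'.1) * cross f (dir 0) + (c.2 - c'.2) * cross f (dir θ)| ≤ |cross x y| := by
    intro c hc c' hc'
    have hmem : ∀ c ∈ Icc (0 : ℝ × ℝ) 1, z + frame (dir 0) (dir θ) c ∈ frame x y '' cell k :=
      fun c hc => h (vadd_mem_vadd_set (by rw [uR_eq_image_frame]; exact mem_image_of_mem _ hc))
    convert abs_cross_sub_le hf (hmem c hc) (hmem c' hc') using 2
    simp [cross]; ring
  have h₁ := hwidth (1, 1) (mem_Icc_zero_one.2 (by norm_num)) 0
    (mem_Icc_zero_one.2 (by norm_num))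
  have h₂ := hwidth (1, 0) (mem_Icc_zero_one.2 (by norm_num)) (0, 1)
    (mem_Icc_zero_one.2 (by norm_num))
  norm_num at h₁ h₂
  rcases abs_cases (cross f (dir 0)) with ⟨hA, -⟩ | ⟨hA, -⟩ <;>
    rcases abs_cases (cross f (dir θ)) with ⟨hB, -⟩ | ⟨hB, -⟩ <;> rw [hA, hB] <;>
    linarith [abs_le.1 h₁, abs_le.1 h₂]

lemma vadd_uR_not_subset_image_cell {θ : ℝ} (hθ : 0 < θ) (hθπ : θ < π) (z : Pt) (k : ℕ × ℕ) :
    ¬ z +ᵥ uR θ ⊆ frame (dir (θ + 2 * π / 3)) (dir (5 * π / 3)) '' cell k := by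
  intro h
  have h₁ := abs_add_abs_cross_le (Or.inl rfl) h
  have h₂ := abs_add_abs_cross_le (Or.inr rfl) h
  simp only [cross_dir_dir] at h₁ h₂
  have s3 : sin (π / 3) = √3 / 2 := sin_pi_div_three
  have c3 : cos (π / 3) = 1 / 2 := cos_pi_div_three
  have e₁ : sin (5 * π / 3 - (θ + 2 * π / 3)) = sin θ := by
    rw [show 5 * π / 3 - (θ + 2 * π / 3) = π - θ by ring, sin_pi_sub]
  have e₂ : sin (θ - (θ + 2 * π / 3)) = -(√3 / 2) := by
    rw [show θ - (θ + 2 * π / 3) = -(π - π / 3) by ring, sin_neg, sin_pi_sub, s3]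
  have e₃ : sin (0 - 5 * π / 3) = √3 / 2 := by
    rw [show (0 : ℝ) - 5 * π / 3 = π / 3 - 2 * π by ring, sin_sub_two_pi, s3]
  have e₄ : sin (0 - (θ + 2 * π / 3)) = sin θ / 2 - √3 / 2 * cos θ := by
    rw [show 0 - (θ + 2 * π / 3) = -(θ + (π - π / 3)) by ring, sin_neg, sin_add, sin_pi_sub,
      cos_pi_sub, s3, c3]
    ring
  have e₅ : sin (θ - 5 * π / 3) = sin θ / 2 + √3 / 2 * cos θ := by
    rw [show θ - 5 * π / 3 = θ + π / 3 - 2 * π by ring, sin_sub_two_pi, sin_add, s3, c3]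
    ring
  have hs := sin_pos_of_pos_of_lt_pi hθ hθπ
  have h3 : (0 : ℝ) < √3 / 2 := by positivity
  rw [e₁, e₂, e₄, abs_of_pos hs, abs_neg, abs_of_pos h3] at h₁
  rw [e₁, e₃, e₅, abs_of_pos hs, abs_of_pos h3] at h₂
  have hsqrt : 1 < √3 := by rw [Real.lt_sqrt zero_le_one]; norm_num
  -- the two bounds add up to `√3 + sin θ ≤ 2 sin θ`
  linarith [le_abs_self (sin θ / 2 - √3 / 2 * cos θ), le_abs_self (sin θ / 2 + √3 / 2 * cos θ),
    sin_le_one θ]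

lemma eq_zero_of_mem_closedCone {a b : ℝ} (hab : sin (b - a) ≠ 0) {v : Pt}
    (hv : v ∈ closedCone a b) (hv' : -v ∈ closedCone a b) : v = 0 := by
  obtain ⟨c, hc, rfl⟩ := hv
  obtain ⟨c', hc', hcc'⟩ := hv'
  have hsum : c' + c = 0 := frame_injective (by rwa [cross_dir_dir]) (by
    rw [map_add, hcc', map_zero, neg_add_cancel])
  have hc0 : c ≤ 0 := calc
    c = 0 + c := (zero_add c).symm
    _ ≤ c' + c := add_le_add_left hc' c
    _ = 0 := hsum
  rw [le_antisymm hc0 hc, map_zero]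

section

variable {θ : ℝ}

lemma uR_mem_tiling : uR θ ∈ tiling θ :=
  mem_iUnion_of_mem 0 ⟨_, ⟨(0, 0), rfl⟩, by
    simp [cell, corner, uR_eq_image_frame, lowerAngle, upperAngle, Prod.mk_zero_zero]⟩

lemma mem_closedCone_of_vadd_uR_mem_tiling (hθ : 0 < θ) (hθπ : θ < π) {z : Pt}
    (hz : z +ᵥ uR θ ∈ tiling θ) : z ∈ closedCone 0 θ := by
  obtain ⟨i, hi⟩ := mem_iUnion.1 hz
  fin_cases i <;> simp only [lowerAngle, upperAngle, sectorShape] at hi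
  · have h0 : (0 : Pt) ∈ uR θ := by
      rw [uR_eq_image_frame]; exact ⟨0, ⟨le_rfl, zero_le_one⟩, map_zero _⟩
    have hz0 : z ∈ z +ᵥ uR θ := by simpa using vadd_mem_vadd_set (a := z) h0
    simpa using isQuadrantTiling_squareTiling.subset_closedCone hi hz0
  · obtain ⟨f, hf⟩ := exists_eq_image_uT_of_mem_sectorTiling (by simp) hi
    exact absurd hf (vadd_uR_ne_image_uT θ z f)
  · obtain ⟨f, hf⟩ := exists_eq_image_uT_of_mem_sectorTiling (by simp; ring) hi
    exact absurd hf (vadd_uR_ne_image_uT θ z f)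
  · obtain ⟨_, ⟨k, rfl⟩, hk⟩ := hi
    exact absurd hk.ge (vadd_uR_not_subset_image_cell hθ hθπ z k)
  · obtain ⟨f, hf⟩ := exists_eq_image_uT_of_mem_sectorTiling (by simp; ring) hi
    exact absurd hf (vadd_uR_ne_image_uT θ z f)

lemma nonperiodic_tiling (hθ : 0 < θ) (hθπ : θ < π) : Nonperiodic (tiling θ) := by
  intro v hv hper
  have htranslate : ∀ t : Set Pt, (fun x => x + v) '' t = v +ᵥ t := fun t => by
    rw [← image_vadd]; simp_rw [vadd_eq_add, add_comm]
  have h₁ : v +ᵥ uR θ ∈ tiling θ := hper ▸ ⟨uR θ, uR_mem_tiling, htranslate _⟩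
  have h₂ : -v +ᵥ uR θ ∈ tiling θ := by
    obtain ⟨t, ht, hvt⟩ := hper.symm ▸ (uR_mem_tiling : uR θ ∈ tiling θ)
    dsimp only at hvt
    rwa [← hvt, htranslate, neg_vadd_vadd]
  refine hv (eq_zero_of_mem_closedCone ?_ (mem_closedCone_of_vadd_uR_mem_tiling hθ hθπ h₁)
    (mem_closedCone_of_vadd_uR_mem_tiling hθ hθπ h₂))
  simpa using (sin_pos_of_pos_of_lt_pi hθ hθπ).ne'

end

/-! ### Infinitely many copies of each prototile -/

lemma injective_image_frame_vadd {x y : Pt} (h : cross x y ≠ 0) {s : Set (ℝ × ℝ)}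
    (h0 : (0 : ℝ × ℝ) ∈ s) (hs : s ⊆ Ici 0) :
    Injective fun n : ℕ => frame x y '' (corner (n, 0) +ᵥ s) := by
  have hle : ∀ n m : ℕ, corner (n, 0) +ᵥ s = corner (m, 0) +ᵥ s → m ≤ n := fun n m hnm => by
    have hn : corner (n, 0) ∈ corner (m, 0) +ᵥ s := hnm ▸ by
      simpa using vadd_mem_vadd_set (a := corner (n, 0)) h0
    have := (hs (mem_corner_vadd.1 hn)).1
    simp only [corner, Prod.fst_zero, sub_nonneg] at this
    exact_mod_cast this
  intro n m hnm
  have heq := image_injective.2 (frame_injective h) hnm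
  exact le_antisymm (hle m n heq.symm) (hle n m heq)

section

variable {θ : ℝ}

lemma infinite_copies_uR (hθ : 0 < θ) (hθπ : θ < π) :
    {t ∈ tiling θ | ∃ f : Pt ≃ᵢ Pt, t = f '' uR θ}.Infinite := by
  have hsin : cross (dir 0) (dir θ) ≠ 0 := by
    rw [cross_dir_dir, sub_zero]; exact (sin_pos_of_pos_of_lt_pi hθ hθπ).ne'
  refine infinite_of_injective_forall_mem (injective_image_frame_vadd hsin
    (s := Icc 0 1) ⟨le_rfl, zero_le_one⟩ fun c hc => hc.1) fun n => ?_
  have ht : frame (dir 0) (dir θ) '' cell (n, 0) ∈ sectorTiling 0 θ squareTiling :=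
    ⟨_, ⟨(n, 0), rfl⟩, rfl⟩
  exact ⟨mem_iUnion_of_mem 0 ht,
    exists_eq_image_uR_of_mem_sectorTiling (Or.inl (zero_add θ).symm) ht⟩

lemma infinite_copies_uT (hθ : 0 < θ) (hθπ : θ < π) :
    {t ∈ tiling θ | ∃ f : Pt ≃ᵢ Pt, t = f '' uT}.Infinite := by
  have hsin : cross (dir θ) (dir (θ + π / 3)) ≠ 0 := by
    rw [cross_dir_dir, add_sub_cancel_left]
    exact (sin_pos_of_pos_of_lt_pi (by positivity) (by linarith [pi_pos])).ne'
  refine infinite_of_injective_forall_mem (injective_image_frame_vadd hsin (s := unitTri)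
    ⟨le_rfl, le_rfl, by norm_num⟩ fun c hc => ⟨hc.1, hc.2.1⟩) fun n => ?_
  have ht : frame (dir θ) (dir (θ + π / 3)) '' (corner (n, 0) +ᵥ unitTri) ∈
      sectorTiling θ (θ + π / 3) triTiling := ⟨_, ⟨((n, 0), false), rfl⟩, rfl⟩
  exact ⟨mem_iUnion_of_mem 1 ht, exists_eq_image_uT_of_mem_sectorTiling rfl ht⟩

end

end RhombusTriangleTiling

/-- For every angle θ with 0 < θ < π, there exists a non-periodic tiling of the
plane by isometric copies of the unit equilateral triangle and the unit rhombus of angle θ in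
which each prototile is used infinitely many times. -/
theorem stmt_8 :
    ∀ θ : ℝ, 0 < θ → θ < Real.pi →
      ∃ 𝒯 : Set (Set Pt),
        IsTilingBy 𝒯 {uT, uR θ} ∧
        Nonperiodic 𝒯 ∧
        {t ∈ 𝒯 | ∃ f : Pt ≃ᵢ Pt, t = f '' uT}.Infinite ∧
        {t ∈ 𝒯 | ∃ f : Pt ≃ᵢ Pt, t = f '' uR θ}.Infinite := by
  intro θ hθ hθπ
  refine ⟨RhombusTriangleTiling.tiling θ, ?_, ?_, ?_, ?_⟩
  · exact RhombusTriangleTiling.isTilingBy_tiling hθ hθπ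
  · exact RhombusTriangleTiling.nonperiodic_tiling hθ hθπ
  · exact RhombusTriangleTiling.infinite_copies_uT hθ hθπ
  · exact RhombusTriangleTiling.infinite_copies_uR hθ hθπ
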